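/- Let X : ℝ × ℝ → ℝ³ be a smooth family of curves with nowhere-vanishing tangent vector X_σ = ∂_σ X and Frenet data t, n, b, κ, τ (with ∂_s = |X_σ|⁻¹ ∂_σ the arclength derivative), κ > 0 everywhere. Suppose X satisfies the helicity-driven LIA filament equation in arclength form: ∂_t X = (1/2)κ² t + κ_s n + κτ b, where κ_s = ∂_s κ. Then X_σ · ∂_t X_σ = 0, so the vortex strength |X_σ| is independent of time; in particular, if |X_σ| = 1 initially along the filament, the arclength parametrization is preserved by the evolution. -/

import Mathlib

noncomputable section

open Real

/-- Euclidean 3-space. -/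
abbrev E3 : Type := EuclideanSpace ℝ (Fin 3)

/-- The vector cross product on `ℝ³`. -/
def cross3 (u v : E3) : E3 :=
  WithLp.toLp 2 ![u 1 * v 2 - u 2 * v 1, u 2 * v 0 - u 0 * v 2, u 0 * v 1 - u 1 * v 0]

open scoped ContDiff

lemma inner_cross3_left (u w : E3) : (inner ℝ u (cross3 u w) : ℝ) = 0 := by
  simp only [PiLp.inner_apply, RCLike.inner_apply, conj_trivial, Fin.sum_univ_three, cross3]
  simp only [PiLp.toLp_apply, Matrix.cons_val_zero, Matrix.cons_val_one, Matrix.head_cons, Matrix.cons_val_two,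
    Matrix.tail_cons]
  ring

lemma inner_cross3_right (u w : E3) : (inner ℝ w (cross3 u w) : ℝ) = 0 := by
  simp only [PiLp.inner_apply, RCLike.inner_apply, conj_trivial, Fin.sum_univ_three, cross3]
  simp only [PiLp.toLp_apply, Matrix.cons_val_zero, Matrix.cons_val_one, Matrix.head_cons, Matrix.cons_val_two,
    Matrix.tail_cons]
  ring

lemma contDiff_cross3 {f h : ℝ → E3} (hf : ContDiff ℝ ∞ f) (hh : ContDiff ℝ ∞ h) :
    ContDiff ℝ ∞ (fun x => cross3 (f x) (h x)) := by
  rw [contDiff_euclidean]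
  intro i
  have hfc : ∀ j, ContDiff ℝ ∞ (fun x => f x j) := contDiff_euclidean.mp hf
  have hhc : ∀ j, ContDiff ℝ ∞ (fun x => h x j) := contDiff_euclidean.mp hh
  fin_cases i <;>
  · simp only [cross3, PiLp.toLp_apply, Matrix.cons_val_zero, Matrix.cons_val_one, Matrix.head_cons,
      Matrix.cons_val_two, Matrix.tail_cons, Fin.isValue]
    exact ((hfc _).mul (hhc _)).sub ((hfc _).mul (hhc _))

lemma hasDerivAt_par1 {g : ℝ × ℝ → E3} (hg : Differentiable ℝ g) (σ t : ℝ) :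
    HasDerivAt (fun σ' => g (σ', t)) (fderiv ℝ g (σ, t) (1, 0)) σ := by
  have h := (hg (σ, t)).hasFDerivAt
  have hc : HasDerivAt (fun σ' : ℝ => ((σ', t) : ℝ × ℝ)) ((1 : ℝ), (0 : ℝ)) σ :=
    (hasDerivAt_id σ).prodMk (hasDerivAt_const σ t)
  exact h.comp_hasDerivAt σ hc

lemma hasDerivAt_par2 {g : ℝ × ℝ → E3} (hg : Differentiable ℝ g) (σ t : ℝ) :
    HasDerivAt (fun t' => g (σ, t')) (fderiv ℝ g (σ, t) (0, 1)) t := by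
  have h := (hg (σ, t)).hasFDerivAt
  have hc : HasDerivAt (fun t' : ℝ => ((σ, t') : ℝ × ℝ)) ((0 : ℝ), (1 : ℝ)) t :=
    (hasDerivAt_const t σ).prodMk (hasDerivAt_id t)
  exact h.comp_hasDerivAt t hc

lemma mixed_partial {g : ℝ × ℝ → E3} (hg : ContDiff ℝ ∞ g) (σ t : ℝ) :
    deriv (fun t' => deriv (fun σ' => g (σ', t')) σ) t
      = deriv (fun σ' => deriv (fun t' => g (σ', t')) t) σ := by
  have hgd : Differentiable ℝ g := hg.differentiable (by simp)
  have hdg : ContDiff ℝ ∞ (fderiv ℝ g) := hg.fderiv_right (by simp)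
  have hD2 : HasFDerivAt (fderiv ℝ g) (fderiv ℝ (fderiv ℝ g) (σ, t)) (σ, t) :=
    (hdg.differentiable (by simp) (σ, t)).hasFDerivAt
  set D2 := fderiv ℝ (fderiv ℝ g) (σ, t) with hD2def
  have e1 : (fun t' => deriv (fun σ' => g (σ', t')) σ)
      = fun t' => fderiv ℝ g (σ, t') (1, 0) :=
    funext fun t' => (hasDerivAt_par1 hgd σ t').deriv
  have e2 : (fun σ' => deriv (fun t' => g (σ', t')) t)
      = fun σ' => fderiv ℝ g (σ', t) (0, 1) :=
    funext fun σ' => (hasDerivAt_par2 hgd σ' t).deriv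
  have hF1d : HasFDerivAt (fun q => fderiv ℝ g q ((1 : ℝ), (0 : ℝ)))
      ((ContinuousLinearMap.apply ℝ E3 ((1 : ℝ), (0 : ℝ))).comp D2) (σ, t) :=
    (ContinuousLinearMap.apply ℝ E3 ((1 : ℝ), (0 : ℝ))).hasFDerivAt.comp (σ, t) hD2
  have hF2d : HasFDerivAt (fun q => fderiv ℝ g q ((0 : ℝ), (1 : ℝ)))
      ((ContinuousLinearMap.apply ℝ E3 ((0 : ℝ), (1 : ℝ))).comp D2) (σ, t) :=
    (ContinuousLinearMap.apply ℝ E3 ((0 : ℝ), (1 : ℝ))).hasFDerivAt.comp (σ, t) hD2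
  have h2 : HasDerivAt (fun t' => fderiv ℝ g (σ, t') ((1 : ℝ), (0 : ℝ)))
      (D2 (0, 1) (1, 0)) t := by
    have := hF1d.comp_hasDerivAt t ((hasDerivAt_const t σ).prodMk (hasDerivAt_id t))
    exact this
  have h3 : HasDerivAt (fun σ' => fderiv ℝ g (σ', t) ((0 : ℝ), (1 : ℝ)))
      (D2 (1, 0) (0, 1)) σ := by
    have := hF2d.comp_hasDerivAt σ ((hasDerivAt_id σ).prodMk (hasDerivAt_const σ t))
    exact this
  have hsymm : D2 (0, 1) (1, 0) = D2 (1, 0) (0, 1) :=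
    second_derivative_symmetric (fun y => (hgd y).hasFDerivAt) hD2 _ _
  rw [e1, e2, h2.deriv, h3.deriv, hsymm]

/-- **The helicity-driven LIA filament equation preserves the vortex strength.**
If a smooth family of curves `X(σ,t)` with nowhere-vanishing tangent `X_σ`
satisfies `∂ₜX = (1/2)κ² t + κₛ n + κτ b` (with `κₛ = |X_σ|⁻¹ ∂_σ κ` the
arclength derivative of κ), then `X_σ · ∂ₜX_σ = 0`, so the vortex strength
`|X_σ|` is independent of time; in particular, if `|X_σ| = 1` initially, the
arclength parametrization is preserved by the evolution. -/
theorem helicity_LIA_preserves_vortex_strength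
    (X T N B : ℝ → ℝ → E3) (κ τ : ℝ → ℝ → ℝ)
    (hX : ContDiff ℝ (⊤ : ℕ∞) (fun p : ℝ × ℝ => X p.1 p.2))
    (hXσ : ∀ σ t, deriv (fun σ' => X σ' t) σ ≠ 0)
    (hT : ∀ σ t, T σ t =
      ‖deriv (fun σ' => X σ' t) σ‖⁻¹ • deriv (fun σ' => X σ' t) σ)
    (hκ : ∀ σ t, κ σ t =
      ‖(‖deriv (fun σ' => X σ' t) σ‖⁻¹ : ℝ) • deriv (fun σ' => T σ' t) σ‖)
    (hκpos : ∀ σ t, 0 < κ σ t)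
    (hN : ∀ σ t, N σ t =
      (κ σ t)⁻¹ • ((‖deriv (fun σ' => X σ' t) σ‖⁻¹ : ℝ) • deriv (fun σ' => T σ' t) σ))
    (hB : ∀ σ t, B σ t = cross3 (T σ t) (N σ t))
    (hτ : ∀ σ t, τ σ t =
      -(inner ℝ ((‖deriv (fun σ' => X σ' t) σ‖⁻¹ : ℝ) • deriv (fun σ' => B σ' t) σ)
          (N σ t) : ℝ))
    (hPDE : ∀ σ t, deriv (fun t' => X σ t') t =
      ((1/2) * (κ σ t)^2) • T σ t
        + (‖deriv (fun σ' => X σ' t) σ‖⁻¹ * deriv (fun σ' => κ σ' t) σ) • N σ t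
        + (κ σ t * τ σ t) • B σ t) :
    ∀ σ t,
      (inner ℝ (deriv (fun σ' => X σ' t) σ)
        (deriv (fun t' => deriv (fun σ' => X σ' t') σ) t) : ℝ) = 0
      ∧ deriv (fun t' => ‖deriv (fun σ' => X σ' t') σ‖) t = 0
      ∧ ((∀ σ', ‖deriv (fun σ'' => X σ'' 0) σ'‖ = 1) →
          ∀ σ' t', ‖deriv (fun σ'' => X σ'' t') σ'‖ = 1) := by
  have hg : ContDiff ℝ ∞ (fun p : ℝ × ℝ => X p.1 p.2) := hX.of_le (by simp)
  have hgd : Differentiable ℝ (fun p : ℝ × ℝ => X p.1 p.2) := hg.differentiable (by simp)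
  have hdg : ContDiff ℝ ∞ (fderiv ℝ (fun p : ℝ × ℝ => X p.1 p.2)) := hg.fderiv_right (by simp)
  have hF1C : ContDiff ℝ ∞ (fun q => fderiv ℝ (fun p : ℝ × ℝ => X p.1 p.2) q ((1:ℝ), (0:ℝ))) :=
    (ContinuousLinearMap.apply ℝ E3 ((1 : ℝ), (0 : ℝ))).contDiff.comp hdg
  have hvF : ∀ s u, deriv (fun σ' => X σ' u) s
      = fderiv ℝ (fun p : ℝ × ℝ => X p.1 p.2) (s, u) ((1:ℝ), (0:ℝ)) :=
    fun s u => (hasDerivAt_par1 hgd s u).deriv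
  -- ### Part 1 : the inner product vanishes
  have main : ∀ σ t, (inner ℝ (deriv (fun σ' => X σ' t) σ)
      (deriv (fun t' => deriv (fun σ' => X σ' t') σ) t) : ℝ) = 0 := by
    intro σ t
    -- fixed-time tangent field and its smoothness
    have hvfC : ContDiff ℝ ∞ (fun s => deriv (fun σ' => X σ' t) s) := by
      have : (fun s => deriv (fun σ' => X σ' t) s)
          = fun s => fderiv ℝ (fun p : ℝ × ℝ => X p.1 p.2) (s, t) ((1:ℝ), (0:ℝ)) :=
        funext fun s => hvF s t
      rw [this]
      exact hF1C.comp (contDiff_id.prodMk contDiff_const)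
    have hrC : ∀ s, ContDiffAt ℝ ∞ (fun s' => ‖deriv (fun σ' => X σ' t) s'‖) s :=
      fun s => hvfC.contDiffAt.norm ℝ (hXσ s t)
    have hrne : ∀ s, ‖deriv (fun σ' => X σ' t) s‖ ≠ 0 :=
      fun s => norm_ne_zero_iff.mpr (hXσ s t)
    -- T is smooth
    have hTC : ContDiff ℝ ∞ (fun s => T s t) := by
      have : (fun s => T s t)
          = fun s => (‖deriv (fun σ' => X σ' t) s‖⁻¹ : ℝ) • deriv (fun σ' => X σ' t) s :=
        funext fun s => hT s t
      rw [this]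
      exact contDiff_iff_contDiffAt.mpr fun s =>
        ((hrC s).inv (hrne s)).smul hvfC.contDiffAt
    have hT'C : ContDiff ℝ ∞ (deriv (fun s => T s t)) := (contDiff_infty_iff_deriv.mp hTC).2
    -- κ is smooth
    have hκC : ContDiff ℝ ∞ (fun s => κ s t) := by
      have heq : (fun s => κ s t)
          = fun s => ‖(‖deriv (fun σ' => X σ' t) s‖⁻¹ : ℝ) • deriv (fun σ' => T σ' t) s‖ :=
        funext fun s => hκ s t
      rw [heq]
      refine contDiff_iff_contDiffAt.mpr fun s => ContDiffAt.norm ℝ ?_ ?_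
      · exact ((hrC s).inv (hrne s)).smul hT'C.contDiffAt
      · intro h0
        have := hκ s t
        rw [h0] at this
        simp at this
        exact absurd this (ne_of_gt (hκpos s t))
    -- N is smooth
    have hNC : ContDiff ℝ ∞ (fun s => N s t) := by
      have heq : (fun s => N s t)
          = fun s => (κ s t)⁻¹ •
              ((‖deriv (fun σ' => X σ' t) s‖⁻¹ : ℝ) • deriv (fun σ' => T σ' t) s) :=
        funext fun s => hN s t
      rw [heq]
      exact contDiff_iff_contDiffAt.mpr fun s =>
        ((hκC.contDiffAt.inv (ne_of_gt (hκpos s t))).smul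
          (((hrC s).inv (hrne s)).smul hT'C.contDiffAt))
    -- B is smooth
    have hBC : ContDiff ℝ ∞ (fun s => B s t) := by
      have heq : (fun s => B s t) = fun s => cross3 (T s t) (N s t) := funext fun s => hB s t
      rw [heq]
      exact contDiff_cross3 hTC hNC
    have hB'C : ContDiff ℝ ∞ (deriv (fun s => B s t)) := (contDiff_infty_iff_deriv.mp hBC).2
    -- τ is differentiable
    have hτd : Differentiable ℝ (fun s => τ s t) := by
      have heq : (fun s => τ s t)
          = fun s => -(inner ℝ ((‖deriv (fun σ' => X σ' t) s‖⁻¹ : ℝ) • deriv (fun σ' => B σ' t) s)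
              (N s t) : ℝ) := funext fun s => hτ s t
      rw [heq]
      intro s
      exact (DifferentiableAt.inner ℝ
        ((((hrC s).inv (hrne s)).differentiableAt (by simp)).smul
          (hB'C.differentiable (by simp) s))
        (hNC.differentiable (by simp) s)).neg
    have hTd : Differentiable ℝ (fun s => T s t) := hTC.differentiable (by simp)
    have hNd : Differentiable ℝ (fun s => N s t) := hNC.differentiable (by simp)
    have hBd : Differentiable ℝ (fun s => B s t) := hBC.differentiable (by simp)
    have hκd : Differentiable ℝ (fun s => κ s t) := hκC.differentiable (by simp)
    -- Frenet identities
    have hTT : ∀ s, (inner ℝ (T s t) (T s t) : ℝ) = 1 := by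
      intro s
      rw [hT s t, real_inner_smul_left, real_inner_smul_right,
        real_inner_self_eq_norm_mul_norm]
      field_simp [hrne s]
    have hTT' : ∀ s, (inner ℝ (T s t) (deriv (fun s' => T s' t) s) : ℝ) = 0 := by
      intro s
      have h1 := HasDerivAt.inner ℝ (hTd s).hasDerivAt (hTd s).hasDerivAt
      have h2 : (fun s' => (inner ℝ (T s' t) (T s' t) : ℝ)) = fun _ => (1 : ℝ) :=
        funext fun s' => hTT s'
      have h3 : deriv (fun s' => (inner ℝ (T s' t) (T s' t) : ℝ)) s = 0 := by
        rw [h2]; exact deriv_const s 1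
      rw [h1.deriv] at h3
      rw [real_inner_comm] at h3 ⊢
      linarith
    have hTN : ∀ s, (inner ℝ (T s t) (N s t) : ℝ) = 0 := by
      intro s
      rw [hN s t, real_inner_smul_right, real_inner_smul_right, hTT' s]
      ring
    have hNnorm : ∀ s, ‖N s t‖ = 1 := by
      intro s
      rw [hN s t, norm_smul, ← hκ s t, norm_inv, Real.norm_eq_abs,
        abs_of_pos (hκpos s t)]
      field_simp [ne_of_gt (hκpos s t)]
    have hNN : ∀ s, (inner ℝ (N s t) (N s t) : ℝ) = 1 := by
      intro s
      rw [real_inner_self_eq_norm_mul_norm, hNnorm s]; ring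
    have hT'eq : ∀ s, deriv (fun s' => T s' t) s
        = (‖deriv (fun σ' => X σ' t) s‖ * κ s t) • N s t := by
      intro s
      rw [hN s t, smul_smul, smul_smul,
        show ‖deriv (fun σ' => X σ' t) s‖ * κ s t * (κ s t)⁻¹ * ‖deriv (fun σ' => X σ' t) s‖⁻¹
          = 1 from by field_simp [ne_of_gt (hκpos s t), hrne s], one_smul]
    have hTN' : ∀ s, (inner ℝ (T s t) (deriv (fun s' => N s' t) s) : ℝ)
        = -(‖deriv (fun σ' => X σ' t) s‖ * κ s t) := by
      intro s
      have h1 := HasDerivAt.inner ℝ (hTd s).hasDerivAt (hNd s).hasDerivAt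
      have h2 : (fun s' => (inner ℝ (T s' t) (N s' t) : ℝ)) = fun _ => (0 : ℝ) :=
        funext fun s' => hTN s'
      have h3 : deriv (fun s' => (inner ℝ (T s' t) (N s' t) : ℝ)) s = 0 := by
        rw [h2]; exact deriv_const s 0
      rw [h1.deriv] at h3
      have h4 : (inner ℝ (deriv (fun s' => T s' t) s) (N s t) : ℝ)
          = ‖deriv (fun σ' => X σ' t) s‖ * κ s t := by
        rw [hT'eq s, real_inner_smul_left, hNN s]; ring
      rw [h4] at h3
      linarith
    have hTB : ∀ s, (inner ℝ (T s t) (B s t) : ℝ) = 0 := by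
      intro s; rw [hB s t]; exact inner_cross3_left _ _
    have hNB : ∀ s, (inner ℝ (N s t) (B s t) : ℝ) = 0 := by
      intro s; rw [hB s t]; exact inner_cross3_right _ _
    have hTB' : ∀ s, (inner ℝ (T s t) (deriv (fun s' => B s' t) s) : ℝ) = 0 := by
      intro s
      have h1 := HasDerivAt.inner ℝ (hTd s).hasDerivAt (hBd s).hasDerivAt
      have h2 : (fun s' => (inner ℝ (T s' t) (B s' t) : ℝ)) = fun _ => (0 : ℝ) :=
        funext fun s' => hTB s'
      have h3 : deriv (fun s' => (inner ℝ (T s' t) (B s' t) : ℝ)) s = 0 := by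
        rw [h2]; exact deriv_const s 0
      rw [h1.deriv] at h3
      have h4 : (inner ℝ (deriv (fun s' => T s' t) s) (B s t) : ℝ) = 0 := by
        rw [hT'eq s, real_inner_smul_left, hNB s]; ring
      rw [h4] at h3
      linarith
    -- swap partial derivatives
    have hswap : deriv (fun t' => deriv (fun σ' => X σ' t') σ) t
        = deriv (fun σ' => deriv (fun t' => X σ' t') t) σ := mixed_partial hg σ t
    rw [hswap]
    -- rewrite using the PDE
    have hW : (fun s => deriv (fun t' => X s t') t)
        = fun s => ((1/2) * (κ s t)^2) • T s t
            + (‖deriv (fun σ' => X σ' t) s‖⁻¹ * deriv (fun σ' => κ σ' t) s) • N s t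
            + (κ s t * τ s t) • B s t := funext fun s => hPDE s t
    rw [hW]
    -- derivative of coefficient functions
    have hκ'd : Differentiable ℝ (deriv (fun s => κ s t)) :=
      (contDiff_infty_iff_deriv.mp hκC).2.differentiable (by simp)
    have ha : HasDerivAt (fun s => ((1/2) * (κ s t)^2))
        (κ σ t * deriv (fun s => κ s t) σ) σ := by
      have h := ((hκd σ).hasDerivAt.pow 2).const_mul (1/2 : ℝ)
      refine h.congr_deriv ?_
      simp; ring
    have hbd : HasDerivAt
        (fun s => ‖deriv (fun σ' => X σ' t) s‖⁻¹ * deriv (fun σ' => κ σ' t) s)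
        (deriv (fun s => ‖deriv (fun σ' => X σ' t) s‖⁻¹ * deriv (fun σ' => κ σ' t) s) σ) σ :=
      ((((hrC σ).inv (hrne σ)).differentiableAt (by simp)).mul (hκ'd σ)).hasDerivAt
    have hcd : HasDerivAt (fun s => κ s t * τ s t)
        (deriv (fun s => κ s t * τ s t) σ) σ := ((hκd σ).mul (hτd σ)).hasDerivAt
    have h1 := ha.smul (hTd σ).hasDerivAt
    have h2 := hbd.smul (hNd σ).hasDerivAt
    have h3 := hcd.smul (hBd σ).hasDerivAt
    have hsum := (h1.add h2).add h3
    erw [hsum.deriv]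
    -- v = r • T
    have hvT : deriv (fun σ' => X σ' t) σ = ‖deriv (fun σ' => X σ' t) σ‖ • T σ t := by
      rw [hT σ t, smul_smul]
      rw [show ‖deriv (fun σ' => X σ' t) σ‖ * ‖deriv (fun σ' => X σ' t) σ‖⁻¹ = 1 by
        field_simp [hrne σ], one_smul]
    rw [hvT]
    have hTnorm : ‖T σ t‖ = 1 := by
      rw [hT σ t, norm_smul, norm_inv, norm_norm]
      field_simp [hrne σ]
    have hsm : ‖(‖deriv (fun σ' => X σ' t) σ‖ : ℝ) • T σ t‖
        = ‖deriv (fun σ' => X σ' t) σ‖ := by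
      rw [norm_smul, hTnorm, norm_norm, mul_one]
    simp only [hsm, inner_add_right, real_inner_smul_left, real_inner_smul_right,
      hTT σ, hTT' σ, hTN σ, hTN' σ, hTB σ, hTB' σ]
    field_simp [hrne σ]
    ring
  -- ### Part 2 : the norm has zero time-derivative
  have part2 : ∀ σ t, deriv (fun t' => ‖deriv (fun σ' => X σ' t') σ‖) t = 0 := by
    intro σ t
    have e : (fun t' => deriv (fun σ' => X σ' t') σ)
        = fun t' => fderiv ℝ (fun p : ℝ × ℝ => X p.1 p.2) (σ, t') ((1:ℝ), (0:ℝ)) :=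
      funext fun t' => hvF σ t'
    set Z : ℝ → E3 := fun t' => fderiv ℝ (fun p : ℝ × ℝ => X p.1 p.2) (σ, t') ((1:ℝ), (0:ℝ))
      with hZdef
    have hZC : ContDiff ℝ ∞ Z := hF1C.comp (contDiff_const.prodMk contDiff_id)
    have hZd : Differentiable ℝ Z := hZC.differentiable (by simp)
    have hZne : ∀ t', Z t' ≠ 0 := fun t' => by
      have h := hXσ σ t'
      rw [hvF σ t'] at h
      exact h
    have key : (inner ℝ (Z t) (deriv Z t) : ℝ) = 0 := by
      have h := main σ t
      rw [e, hvF σ t] at h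
      exact h
    have hq : HasDerivAt (fun t' => (inner ℝ (Z t') (Z t') : ℝ))
        ((inner ℝ (Z t) (deriv Z t) : ℝ) + (inner ℝ (deriv Z t) (Z t) : ℝ)) t :=
      HasDerivAt.inner ℝ (hZd t).hasDerivAt (hZd t).hasDerivAt
    have hq0 : HasDerivAt (fun t' => (inner ℝ (Z t') (Z t') : ℝ)) 0 t := by
      have hkey2 : (inner ℝ (deriv Z t) (Z t) : ℝ) = 0 := by rw [real_inner_comm]; exact key
      have hz : (inner ℝ (Z t) (deriv Z t) : ℝ) + (inner ℝ (deriv Z t) (Z t) : ℝ) = 0 := by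
        rw [key, hkey2]; ring
      rwa [hz] at hq
    have hnd : ∀ u, DifferentiableAt ℝ (fun t' => ‖Z t'‖) u := fun u =>
      ((hZC.contDiffAt.norm ℝ (hZne u)).differentiableAt (by simp))
    have hm : HasDerivAt (fun t' => ‖Z t'‖ * ‖Z t'‖)
        (deriv (fun t' => ‖Z t'‖) t * ‖Z t‖ + ‖Z t‖ * deriv (fun t' => ‖Z t'‖) t) t :=
      (hnd t).hasDerivAt.mul (hnd t).hasDerivAt
    have e2 : (fun t' => (inner ℝ (Z t') (Z t') : ℝ)) = fun t' => ‖Z t'‖ * ‖Z t'‖ :=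
      funext fun t' => real_inner_self_eq_norm_mul_norm _
    rw [e2] at hq0
    have huniq := hq0.unique hm
    have hZnorm : ‖Z t‖ ≠ 0 := norm_ne_zero_iff.mpr (hZne t)
    have hder0 : deriv (fun t' => ‖Z t'‖) t = 0 := by
      have h3 : deriv (fun t' => ‖Z t'‖) t * ‖Z t‖ = 0 := by linarith [huniq.symm]
      rcases mul_eq_zero.mp h3 with h | h
      · exact h
      · exact absurd h hZnorm
    have e3 : (fun t' => ‖deriv (fun σ' => X σ' t') σ‖) = fun t' => ‖Z t'‖ :=
      funext fun t' => by rw [congrFun e t']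
    rw [e3]
    exact hder0
  refine fun σ t => ⟨main σ t, part2 σ t, ?_⟩
  -- ### Part 3 : unit-speed parametrization is preserved
  intro h0 σ' t'
  have e : (fun u => deriv (fun σ'' => X σ'' u) σ')
      = fun u => fderiv ℝ (fun p : ℝ × ℝ => X p.1 p.2) (σ', u) ((1:ℝ), (0:ℝ)) :=
    funext fun u => hvF σ' u
  set Z : ℝ → E3 := fun u => fderiv ℝ (fun p : ℝ × ℝ => X p.1 p.2) (σ', u) ((1:ℝ), (0:ℝ))
    with hZdef
  have hZC : ContDiff ℝ ∞ Z := hF1C.comp (contDiff_const.prodMk contDiff_id)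
  have hZne : ∀ u, Z u ≠ 0 := fun u => by
    have h := hXσ σ' u
    rw [hvF σ' u] at h
    exact h
  have hnd : Differentiable ℝ (fun u => ‖Z u‖) := fun u =>
    ((hZC.contDiffAt.norm ℝ (hZne u)).differentiableAt (by simp))
  have e3 : (fun u => ‖deriv (fun σ'' => X σ'' u) σ'‖) = fun u => ‖Z u‖ :=
    funext fun u => by rw [congrFun e u]
  have hzero : ∀ u, deriv (fun u' => ‖Z u'‖) u = 0 := fun u => by
    rw [← e3]; exact part2 σ' u
  have hconst : ‖Z t'‖ = ‖Z 0‖ := is_const_of_deriv_eq_zero hnd hzero t' 0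
  have : ‖deriv (fun σ'' => X σ'' t') σ'‖ = ‖Z t'‖ := congrFun e3 t'
  rw [this, hconst]
  have : ‖deriv (fun σ'' => X σ'' 0) σ'‖ = ‖Z 0‖ := congrFun e3 0
  rw [← this]
  exact h0 σ'
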